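/- Let G be a finite r-regular simple graph with girth 5 and diameter 2, and let m be its number of edges. Then every edge of G lies on exactly (r−1)² pentagon subsets (5-element vertex subsets J containing both endpoints of the edge with G[J] a 5-cycle), and consequently 5·c_5(G) = m·(r−1)². -/

import Mathlib

/-!
An edge `ab` lies on the pentagon `a x z y b` for every `x ∈ N(a) \ {b}` and `y ∈ N(b) \ {a}`:
girth 5 makes `x` and `y` distinct and non-adjacent, so diameter 2 gives them a common neighbour
`z`, unique because there is no 4-cycle; the pentagon is induced, as a chord would close a
triangle. Conversely an induced pentagon through `ab` is determined by the other neighbours `x`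
of `a` and `y` of `b` in it, so each edge lies on exactly `(r - 1)²` pentagons. Each pentagon has five edges, and double counting edge–pentagon incidences gives
`5 c₅ = m (r - 1)²`.
-/

open Finset

/-- `numInducedReg G k d` is the number of `k`-element vertex subsets `J` such that every vertex
of `J` has exactly `d` neighbours inside `J`, i.e. such that the induced subgraph `G[J]` is
`d`-regular.  In particular `numInducedReg G 3 2 = k₃(G)` (triangles),
`numInducedReg G 4 3 = k₄(G)`, `numInducedReg G 4 2 = c₄(G)` (a 2-regular graph on 4 vertices is
a 4-cycle), `numInducedReg G 4 1 = (k₂⊎k₂)(G)` (a 1-regular graph on 4 vertices is a perfect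
matching), and `numInducedReg G 5 2 = c₅(G)` (a 2-regular graph on 5 vertices is a 5-cycle). -/
def numInducedReg {V : Type*} (G : SimpleGraph V) [Fintype V] [DecidableEq V] [DecidableRel G.Adj]
    (k d : ℕ) : ℕ :=
  (((univ : Finset V).powersetCard k).filter
    fun J => ∀ v ∈ J, (J.filter fun u => G.Adj v u).card = d).card

lemma Finset.exists_other_of_card_filter_eq_two {α : Type*} [DecidableEq α] {p : α → Prop}
    [DecidablePred p] {s : Finset α} {b : α} (h2 : #(s.filter p) = 2) (hb : b ∈ s) (hpb : p b) :
    ∃ x ∈ s, p x ∧ x ≠ b ∧ ∀ u ∈ s, p u → u = b ∨ u = x := by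
  obtain ⟨x, hx⟩ := card_eq_one.mp
    (by rw [card_erase_of_mem (mem_filter.mpr ⟨hb, hpb⟩), h2] : #((s.filter p).erase b) = 1)
  have hxmem : x ∈ (s.filter p).erase b := hx ▸ mem_singleton_self x
  simp only [mem_erase, mem_filter] at hxmem
  refine ⟨x, hxmem.2.1, hxmem.2.2, hxmem.1, fun u hu hpu => or_iff_not_imp_left.mpr fun hub => ?_⟩
  have : u ∈ (s.filter p).erase b := mem_erase.mpr ⟨hub, mem_filter.mpr ⟨hu, hpu⟩⟩
  rwa [hx, mem_singleton] at this

lemma Finset.insert_rotate_five {α : Type*} [DecidableEq α] (a₀ a₁ a₂ a₃ a₄ : α) :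
    ({a₁, a₂, a₃, a₄, a₀} : Finset α) = {a₀, a₁, a₂, a₃, a₄} := by
  ext; simp only [mem_insert, mem_singleton]; tauto

namespace SimpleGraph

variable {V : Type*} {G : SimpleGraph V}

lemma cliqueFree_three_of_three_lt_egirth (hg : 3 < G.egirth) : G.CliqueFree 3 := by
  classical
  intro s hs
  obtain ⟨a, b, c, hab, hac, hbc, rfl⟩ := is3Clique_iff.mp hs
  have hcyc : (Walk.cons hab (.cons hbc (.cons hac.symm .nil))).IsCycle := by
    rw [Walk.cons_isCycle_iff]
    simp [Walk.isPath_def, hab.ne, hab.ne', hac.ne, hbc.ne, hac.ne']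
  exact absurd (egirth_le_length hcyc) (by simpa using hg.not_ge)

lemma eq_of_adj_of_adj_of_four_lt_egirth (hg : 4 < G.egirth) {x y c d : V} (hxy : x ≠ y)
    (hxc : G.Adj x c) (hcy : G.Adj c y) (hxd : G.Adj x d) (hdy : G.Adj d y) : c = d := by
  by_contra hcd
  have hcyc : (Walk.cons hxc (.cons hcy (.cons hdy.symm (.cons hxd.symm .nil)))).IsCycle := by
    rw [Walk.cons_isCycle_iff]
    simp [Walk.isPath_def, hxy, hcd, hxc.ne', hcy.ne, hdy.ne', hxd.ne', Ne.symm hxy]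
  exact absurd (egirth_le_length hcyc) (by simpa using hg.not_ge)

lemma exists_adj_adj_of_ediam_le_two (hd : G.ediam ≤ 2) {x y : V} (hxy : x ≠ y)
    (hadj : ¬ G.Adj x y) : ∃ z, G.Adj x z ∧ G.Adj z y := by
  have : ¬ 2 < G.edist x y := (edist_le_ediam.trans hd).not_gt
  rw [two_lt_edist_iff] at this
  obtain ⟨z, hz⟩ := Set.nonempty_iff_ne_empty.mpr fun h => this ⟨hxy, hadj, h⟩
  exact ⟨z, hz.1, hz.2.symm⟩

lemma CliqueFree.not_adj_of_adj_of_adj (hG : G.CliqueFree 3) {a b c : V} (hab : G.Adj a b)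
    (hac : G.Adj a c) : ¬ G.Adj b c :=
  fun hbc => isIndepSet_neighborSet_of_triangleFree _ hG a hab hac hbc.ne hbc

lemma ne_and_not_adj_of_four_lt_egirth (hg : 4 < G.egirth) {x a b y : V} (hxa : G.Adj x a)
    (hab : G.Adj a b) (hby : G.Adj b y) (hxb : x ≠ b) (hay : a ≠ y) : x ≠ y ∧ ¬ G.Adj x y := by
  have hG : G.CliqueFree 3 := cliqueFree_three_of_three_lt_egirth (lt_trans (by norm_num) hg)
  refine ⟨?_, fun hxy => hxb (eq_of_adj_of_adj_of_four_lt_egirth hg hay hab hby hxa.symm hxy).symm⟩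
  rintro rfl
  exact hG.not_adj_of_adj_of_adj hab hxa.symm hby

lemma CliqueFree.ne_and_not_adj_of_pentagon (hG : G.CliqueFree 3) {v₀ v₁ v₂ v₃ v₄ : V}
    (h01 : G.Adj v₀ v₁) (h12 : G.Adj v₁ v₂) (h23 : G.Adj v₂ v₃) (h34 : G.Adj v₃ v₄)
    (h40 : G.Adj v₄ v₀) : v₀ ≠ v₂ ∧ ¬ G.Adj v₀ v₂ := by
  refine ⟨?_, hG.not_adj_of_adj_of_adj h01.symm h12⟩
  rintro rfl
  exact hG.not_adj_of_adj_of_adj h34 h23.symm h40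

variable [DecidableEq V]

lemma CliqueFree.card_pentagon (hG : G.CliqueFree 3) {v₀ v₁ v₂ v₃ v₄ : V}
    (h01 : G.Adj v₀ v₁) (h12 : G.Adj v₁ v₂) (h23 : G.Adj v₂ v₃) (h34 : G.Adj v₃ v₄)
    (h40 : G.Adj v₄ v₀) : #({v₀, v₁, v₂, v₃, v₄} : Finset V) = 5 := by
  have h02 := (hG.ne_and_not_adj_of_pentagon h01 h12 h23 h34 h40).1
  have h13 := (hG.ne_and_not_adj_of_pentagon h12 h23 h34 h40 h01).1
  have h24 := (hG.ne_and_not_adj_of_pentagon h23 h34 h40 h01 h12).1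
  have h30 := (hG.ne_and_not_adj_of_pentagon h34 h40 h01 h12 h23).1
  have h41 := (hG.ne_and_not_adj_of_pentagon h40 h01 h12 h23 h34).1
  rw [card_insert_of_notMem (by simp [h01.ne, h02, h30.symm, h40.ne']),
    card_insert_of_notMem (by simp [h12.ne, h13, h41.symm]),
    card_insert_of_notMem (by simp [h23.ne, h24]), card_pair h34.ne]

variable [DecidableRel G.Adj]

lemma CliqueFree.filter_adj_pentagon (hG : G.CliqueFree 3) {v₀ v₁ v₂ v₃ v₄ : V}
    (h01 : G.Adj v₀ v₁) (h12 : G.Adj v₁ v₂) (h23 : G.Adj v₂ v₃) (h34 : G.Adj v₃ v₄)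
    (h40 : G.Adj v₄ v₀) : ({v₀, v₁, v₂, v₃, v₄} : Finset V).filter (G.Adj v₀) = {v₁, v₄} := by
  have h02 := (hG.ne_and_not_adj_of_pentagon h01 h12 h23 h34 h40).2
  have h30 := (hG.ne_and_not_adj_of_pentagon h34 h40 h01 h12 h23).2
  ext u
  simp only [mem_filter, mem_insert, mem_singleton]
  constructor
  · rintro ⟨rfl | rfl | rfl | rfl | rfl, hu⟩
    · exact absurd hu G.irrefl
    · exact .inl rfl
    · exact absurd hu h02
    · exact absurd hu.symm h30
    · exact .inr rfl
  · rintro (rfl | rfl)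
    · exact ⟨.inr (.inl rfl), h01⟩
    · exact ⟨.inr (.inr (.inr (.inr rfl))), h40.symm⟩

lemma CliqueFree.card_filter_adj_pentagon_first (hG : G.CliqueFree 3) {v₀ v₁ v₂ v₃ v₄ : V}
    (h01 : G.Adj v₀ v₁) (h12 : G.Adj v₁ v₂) (h23 : G.Adj v₂ v₃) (h34 : G.Adj v₃ v₄)
    (h40 : G.Adj v₄ v₀) : #(({v₀, v₁, v₂, v₃, v₄} : Finset V).filter (G.Adj v₀)) = 2 := by
  rw [hG.filter_adj_pentagon h01 h12 h23 h34 h40,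
    card_pair (hG.ne_and_not_adj_of_pentagon h40 h01 h12 h23 h34).1.symm]

lemma CliqueFree.card_filter_adj_pentagon (hG : G.CliqueFree 3) {v₀ v₁ v₂ v₃ v₄ : V}
    (h01 : G.Adj v₀ v₁) (h12 : G.Adj v₁ v₂) (h23 : G.Adj v₂ v₃) (h34 : G.Adj v₃ v₄)
    (h40 : G.Adj v₄ v₀) :
    ∀ v ∈ ({v₀, v₁, v₂, v₃, v₄} : Finset V),
      #(({v₀, v₁, v₂, v₃, v₄} : Finset V).filter (G.Adj v)) = 2 := by
  intro v hv
  simp only [mem_insert, mem_singleton] at hv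
  rcases hv with rfl | rfl | rfl | rfl | rfl
  · exact hG.card_filter_adj_pentagon_first h01 h12 h23 h34 h40
  · rw [← insert_rotate_five]
    exact hG.card_filter_adj_pentagon_first h12 h23 h34 h40 h01
  · rw [← insert_rotate_five, ← insert_rotate_five]
    exact hG.card_filter_adj_pentagon_first h23 h34 h40 h01 h12
  · rw [← insert_rotate_five, ← insert_rotate_five, ← insert_rotate_five]
    exact hG.card_filter_adj_pentagon_first h34 h40 h01 h12 h23
  · rw [← insert_rotate_five, ← insert_rotate_five, ← insert_rotate_five, ← insert_rotate_five]
    exact hG.card_filter_adj_pentagon_first h40 h01 h12 h23 h34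

lemma CliqueFree.exists_eq_pentagon (hG : G.CliqueFree 3) {a b : V} (hab : G.Adj a b)
    {J : Finset V} (hJ : #J = 5) (hJ2 : ∀ v ∈ J, #(J.filter (G.Adj v)) = 2) (ha : a ∈ J)
    (hb : b ∈ J) : ∃ x y z, G.Adj a x ∧ x ≠ b ∧ G.Adj b y ∧ y ≠ a ∧ G.Adj x z ∧ G.Adj z y ∧
      J = {a, x, z, y, b} := by
  obtain ⟨x, hxJ, hax, hxb, hxa_nbrs⟩ := exists_other_of_card_filter_eq_two (hJ2 a ha) hb hab
  obtain ⟨y, hyJ, hby, hya, hyb_nbrs⟩ := exists_other_of_card_filter_eq_two (hJ2 b hb) ha hab.symm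
  have hxy : x ≠ y := by
    rintro rfl; exact hG.not_adj_of_adj_of_adj hax.symm hby.symm hab
  have hKJ : ({a, x, y, b} : Finset V) ⊆ J := by
    simp only [insert_subset_iff, singleton_subset_iff]; exact ⟨ha, hxJ, hyJ, hb⟩
  have hK : #({a, x, y, b} : Finset V) = 4 := by
    rw [card_insert_of_notMem (by simp [hax.ne, hya.symm, hab.ne]),
      card_insert_of_notMem (by simp [hxy, hxb]), card_pair hby.ne']
  obtain ⟨z, hz⟩ := card_eq_one.mp
    (by rw [card_sdiff_of_subset hKJ, hJ, hK] : #(J \ {a, x, y, b}) = 1)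
  have hJ_eq : J = {a, x, z, y, b} := by
    rw [← union_sdiff_of_subset hKJ, hz]
    ext; simp only [mem_union, mem_insert, mem_singleton]; tauto
  have hzmem : z ∈ J \ {a, x, y, b} := hz ▸ mem_singleton_self z
  simp only [mem_sdiff, mem_insert, mem_singleton, not_or] at hzmem
  obtain ⟨hzJ, hza, hzx, hzy, hzb⟩ := hzmem
  have hz_nbrs : J.filter (G.Adj z) = {x, y} := by
    refine eq_of_subset_of_card_le (fun u hu => ?_) (by rw [hJ2 z hzJ, card_pair hxy])
    rw [mem_filter, hJ_eq] at hu
    simp only [mem_insert, mem_singleton] at hu ⊢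
    obtain ⟨rfl | rfl | rfl | rfl | rfl, hzu⟩ := hu
    · exact absurd (hxa_nbrs z hzJ hzu.symm) (by simp [hzb, hzx])
    · exact .inl rfl
    · exact absurd hzu G.irrefl
    · exact .inr rfl
    · exact absurd (hyb_nbrs z hzJ hzu.symm) (by simp [hza, hzy])
  have hxz : G.Adj z x := (mem_filter.mp (hz_nbrs ▸ mem_insert_self x {y})).2
  have hyz : G.Adj z y := (mem_filter.mp (hz_nbrs ▸ mem_insert_of_mem (mem_singleton_self y))).2
  exact ⟨x, y, z, hax, hxb, hby, hya, hxz.symm, hyz, hJ_eq⟩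

variable [Fintype V]

lemma card_neighborFinset_inter_eq_one (hg : 4 < G.egirth) (hd : G.ediam ≤ 2) {x y : V}
    (hxy : x ≠ y) (hadj : ¬ G.Adj x y) : #(G.neighborFinset x ∩ G.neighborFinset y) = 1 := by
  obtain ⟨z, hxz, hzy⟩ := exists_adj_adj_of_ediam_le_two hd hxy hadj
  refine card_eq_one.mpr ⟨z, eq_singleton_iff_unique_mem.mpr ⟨by simp [hxz, hzy.symm], ?_⟩⟩
  intro w hw
  simp only [mem_inter, mem_neighborFinset] at hw
  exact eq_of_adj_of_adj_of_four_lt_egirth hg hxy hw.1 hw.2.symm hxz hzy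

lemma sum_card_filter_adj_eq_two_mul (s : Finset V) :
    ∑ v ∈ s, #(s.filter (G.Adj v)) = 2 * #(G.edgeFinset.filter fun e => ∀ v ∈ e, v ∈ s) := by
  have hdeg : ∀ v, (G.between s s).degree v = if v ∈ s then #(s.filter (G.Adj v)) else 0 := by
    intro v
    rw [← card_neighborFinset_eq_degree]
    split_ifs with hv
    · congr 1; ext u; simp [between_adj, hv, and_comm]
    · rw [card_eq_zero]; ext u; simp [between_adj, hv]
  have hedges : (G.between s s).edgeFinset = G.edgeFinset.filter fun e => ∀ v ∈ e, v ∈ s := by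
    ext e
    induction e using Sym2.ind
    simp [between_adj, and_comm]
  rw [← hedges, ← sum_degrees_eq_twice_card_edges, ← sum_filter_add_sum_filter_not univ (· ∈ s)]
  simp [hdeg]

def pentagons (G : SimpleGraph V) [DecidableRel G.Adj] : Finset (Finset V) :=
  (univ.powersetCard 5).filter fun J => ∀ v ∈ J, #(J.filter (G.Adj v)) = 2

lemma card_filter_edgeFinset_of_mem_pentagons {J : Finset V} (hJ : J ∈ pentagons G) :
    #(G.edgeFinset.filter fun e => ∀ v ∈ e, v ∈ J) = 5 := by
  simp only [pentagons, mem_filter, mem_powersetCard_univ] at hJ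
  have := sum_card_filter_adj_eq_two_mul (G := G) J
  rw [sum_congr rfl hJ.2, sum_const, hJ.1, smul_eq_mul] at this
  omega

/-- Paths `a – x – z – y – b` with `x ≠ b` and `y ≠ a`, encoded as `⟨(x, y), z⟩`. -/
def pentagonPaths (G : SimpleGraph V) [DecidableRel G.Adj] (a b : V) : Finset (Σ _ : V × V, V) :=
  ((G.neighborFinset a).erase b ×ˢ (G.neighborFinset b).erase a).sigma
    fun p => G.neighborFinset p.1 ∩ G.neighborFinset p.2

@[simp]
lemma mem_pentagonPaths {a b x y z : V} :
    ⟨(x, y), z⟩ ∈ pentagonPaths G a b ↔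
      (x ≠ b ∧ G.Adj a x) ∧ (y ≠ a ∧ G.Adj b y) ∧ G.Adj x z ∧ G.Adj y z := by
  simp [pentagonPaths, and_assoc]

lemma card_pentagonPaths {r : ℕ} (hg : 4 < G.egirth) (hd : G.ediam ≤ 2)
    (hreg : G.IsRegularOfDegree r) {a b : V} (hab : G.Adj a b) :
    #(pentagonPaths G a b) = (r - 1) ^ 2 := by
  rw [pentagonPaths, card_sigma, sum_congr rfl fun p hp => ?_, sum_const, smul_eq_mul, mul_one,
    card_product, card_erase_of_mem (by simpa using hab),
    card_erase_of_mem (by simpa using hab.symm), card_neighborFinset_eq_degree,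
    card_neighborFinset_eq_degree, hreg a, hreg b, sq]
  simp only [mem_product, mem_erase, mem_neighborFinset] at hp
  obtain ⟨⟨hxb, hax⟩, hya, hby⟩ := hp
  obtain ⟨hxy, hadj⟩ := ne_and_not_adj_of_four_lt_egirth hg hax.symm hab hby hxb hya.symm
  exact card_neighborFinset_inter_eq_one hg hd hxy hadj

lemma card_filter_pentagons_eq_card_pentagonPaths (hg : 4 < G.egirth) {a b : V}
    (hab : G.Adj a b) :
    #((pentagons G).filter fun J => a ∈ J ∧ b ∈ J) = #(pentagonPaths G a b) := by
  have hG := cliqueFree_three_of_three_lt_egirth (lt_trans (by norm_num) hg)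
  symm
  refine card_bij (fun p _ => {a, p.1.1, p.2, p.1.2, b}) ?_ ?_ ?_
  · rintro ⟨⟨x, y⟩, z⟩ hp
    obtain ⟨⟨-, hax⟩, ⟨-, hby⟩, hxz, hyz⟩ := mem_pentagonPaths.mp hp
    simp only [pentagons, mem_filter, mem_powersetCard_univ]
    exact ⟨⟨hG.card_pentagon hax hxz hyz.symm hby.symm hab.symm,
      hG.card_filter_adj_pentagon hax hxz hyz.symm hby.symm hab.symm⟩, by simp, by simp⟩
  · rintro ⟨⟨x, y⟩, z⟩ hp ⟨⟨x', y'⟩, z'⟩ hp' heq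
    obtain ⟨⟨hxb, hax⟩, ⟨hya, hby⟩, hxz, hyz⟩ := mem_pentagonPaths.mp hp
    obtain ⟨⟨-, hax'⟩, ⟨-, hby'⟩, hxz', hyz'⟩ := mem_pentagonPaths.mp hp'
    have hx : x ∈ ({a, x', z', y', b} : Finset V).filter (G.Adj a) :=
      heq ▸ mem_filter.mpr ⟨by simp, hax⟩
    have hy : y ∈ ({a, x', z', y', b} : Finset V).filter (G.Adj b) :=
      heq ▸ mem_filter.mpr ⟨by simp, hby⟩
    rw [hG.filter_adj_pentagon hax' hxz' hyz'.symm hby'.symm hab.symm] at hx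
    rw [insert_rotate_five b, hG.filter_adj_pentagon hab.symm hax' hxz' hyz'.symm hby'.symm] at hy
    obtain rfl : x = x' := by simpa [hxb] using hx
    obtain rfl : y = y' := by simpa [hya] using hy
    obtain rfl : z = z' := eq_of_adj_of_adj_of_four_lt_egirth hg
      (ne_and_not_adj_of_four_lt_egirth hg hax.symm hab hby hxb hya.symm).1
      hxz hyz.symm hxz' hyz'.symm
    rfl
  · intro J hJ
    simp only [pentagons, mem_filter, mem_powersetCard_univ] at hJ
    obtain ⟨⟨hJ5, hJ2⟩, ha, hb⟩ := hJ
    obtain ⟨x, y, z, hax, hxb, hby, hya, hxz, hzy, rfl⟩ := hG.exists_eq_pentagon hab hJ5 hJ2 ha hb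
    exact ⟨⟨(x, y), z⟩, by simp [hax, hxb, hby, hya, hxz, hzy.symm], rfl⟩

lemma card_filter_pentagons_of_mem_edgeFinset {r : ℕ} (hg : 4 < G.egirth) (hd : G.ediam ≤ 2)
    (hreg : G.IsRegularOfDegree r) {e : Sym2 V} (he : e ∈ G.edgeFinset) :
    #((pentagons G).filter fun J => ∀ v ∈ e, v ∈ J) = (r - 1) ^ 2 := by
  induction e using Sym2.ind with | _ a b => ?_
  have hab : G.Adj a b := mem_edgeFinset.mp he
  simpa [card_filter_pentagons_eq_card_pentagonPaths hg hab] using card_pentagonPaths hg hd hreg hab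

end SimpleGraph

/-- Let `G` be a finite `r`-regular simple graph with girth 5 and diameter 2, and let `m`
be its number of edges.  Then every edge of `G` lies on exactly `(r−1)²` pentagon subsets
(5-element vertex subsets `J` containing both endpoints of the edge such that `G[J]` is a
5-cycle, i.e. `G[J]` is 2-regular), and consequently `5·c_5(G) = m·(r−1)²`. -/
theorem stmt_17 {V : Type*} [Fintype V] [DecidableEq V] (G : SimpleGraph V) [DecidableRel G.Adj]
    (r m : ℕ) (hreg : G.IsRegularOfDegree r) (hgirth : G.girth = 5) (hdiam : G.diam = 2)
    (hm : G.edgeFinset.card = m) :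
    (∀ e ∈ G.edgeFinset,
        ((((univ : Finset V).powersetCard 5).filter fun J =>
          (∀ v ∈ e, v ∈ J) ∧ ∀ v ∈ J, (J.filter fun u => G.Adj v u).card = 2).card)
          = (r - 1) ^ 2) ∧
      5 * numInducedReg G 5 2 = m * (r - 1) ^ 2 := by
  have hg : 4 < G.egirth := by
    rw [(ENat.toNat_eq_iff (by norm_num)).mp hgirth]; norm_num
  have hd : G.ediam ≤ 2 := ((ENat.toNat_eq_iff two_ne_zero).mp hdiam).le
  have hedge := fun e (he : e ∈ G.edgeFinset) =>
    SimpleGraph.card_filter_pentagons_of_mem_edgeFinset hg hd hreg he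
  refine ⟨fun e he => ?_, ?_⟩
  · rw [← hedge e he, SimpleGraph.pentagons, filter_filter]
    simp only [and_comm]
  · rw [← hm, mul_comm]
    exact (card_mul_eq_card_mul (fun e J => ∀ v ∈ e, v ∈ J) hedge
      fun J hJ => SimpleGraph.card_filter_edgeFinset_of_mem_pentagons hJ).symm
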